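/- arXiv:1503.00507 — 3 statements merged into one kernel-verified Lean document; each statement's English description precedes it below -/
import Mathlib

section
/- Define f : {0,1}³ → {0,1}² by f(x,y,ξ) = (x,y) if x ≠ y, f(0,0,1) = (1,1), and f(x,y,ξ) = (0,0) otherwise (i.e. when x = y = 1, or x = y = 0 and ξ = 0). Let 0 < p < 1 and 0 < α < 1, and set α* = p(1-α)/(α + p(1-α)). If (X,Y,ξ) is distributed as the product measure Ber(α) ⊗ Ber(α*) ⊗ Ber(p) on {0,1}³, then f(X,Y,ξ) is distributed as Ber(α) ⊗ Ber(α*) on {0,1}². -/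
open MeasureTheory

/-- Bernoulli measure on `{0,1}` (modeled as `Bool`), giving mass `q` to `1 = true`. -/
noncomputable def ber (q : ℝ) : Measure Bool :=
  ENNReal.ofReal (1 - q) • Measure.dirac false + ENNReal.ofReal q • Measure.dirac true

/-- The local update map of Model 1: `f(x,y,ξ) = (x,y)` if `x ≠ y`,
`f(0,0,1) = (1,1)`, and `(0,0)` otherwise. -/
def hamUpdate : Bool × Bool × Bool → Bool × Bool := fun ⟨x, y, ξ⟩ =>
  if x ≠ y then (x, y)
  else if x = false ∧ y = false ∧ ξ = true then (true, true)
  else (false, false)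

instance berSFinite (q : ℝ) : SFinite (ber q) := by rw [ber]; infer_instance

lemma ber_false (q : ℝ) : ber q {false} = ENNReal.ofReal (1 - q) := by
  simp [ber, Measure.dirac_apply']

lemma ber_true (q : ℝ) : ber q {true} = ENNReal.ofReal q := by
  simp [ber, Measure.dirac_apply']

lemma ofReal_mul3 (a b c : ℝ) (ha : 0 ≤ a) (hb : 0 ≤ b) :
    ENNReal.ofReal a * (ENNReal.ofReal b * ENNReal.ofReal c)
      = ENNReal.ofReal (a * (b * c)) := by
  rw [← ENNReal.ofReal_mul hb, ← ENNReal.ofReal_mul ha]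

theorem local_balance_model1 (p α αs : ℝ) (hp : 0 < p) (hp1 : p < 1)
    (ha : 0 < α) (ha1 : α < 1)
    (hαs : αs = p * (1 - α) / (α + p * (1 - α))) :
    ((ber α).prod ((ber αs).prod (ber p))).map hamUpdate = (ber α).prod (ber αs) := by
  have hq : 0 < α + p * (1 - α) := by nlinarith
  have hαs0 : 0 ≤ αs := by rw [hαs]; exact div_nonneg (by nlinarith) hq.le
  have hαs1 : αs ≤ 1 := by rw [hαs, div_le_one hq]; nlinarith
  have key : (1 - α) * ((1 - αs) * p) = α * αs := by
    have h : αs * (α + p * (1 - α)) = p * (1 - α) := by rw [hαs]; field_simp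
    nlinarith [h]
  have hm : Measurable hamUpdate := measurable_of_countable _
  have htrip : ∀ x y ξ : Bool, ((ber α).prod ((ber αs).prod (ber p))) {(x, y, ξ)}
      = ber α {x} * (ber αs {y} * ber p {ξ}) := by
    intro x y ξ
    rw [show ({(x, y, ξ)} : Set (Bool × Bool × Bool)) = {x} ×ˢ ({y} ×ˢ {ξ}) by simp,
      Measure.prod_prod, Measure.prod_prod]
  have hpair : ∀ a b : Bool, ((ber α).prod (ber αs)) {(a, b)} = ber α {a} * ber αs {b} := by
    intro a b
    rw [show ({(a, b)} : Set (Bool × Bool)) = {a} ×ˢ {b} by simp, Measure.prod_prod]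
  apply Measure.ext_of_singleton
  rintro ⟨a, b⟩
  rw [Measure.map_apply hm (measurableSet_singleton _), hpair]
  cases a <;> cases b
  · -- (false, false)
    have hpre : hamUpdate ⁻¹' {(false, false)} =
        {((false : Bool), (false : Bool), (false : Bool))} ∪
          ({((true : Bool), (true : Bool), (false : Bool))} ∪
            {((true : Bool), (true : Bool), (true : Bool))}) := by
      ext ⟨x, y, ξ⟩; cases x <;> cases y <;> cases ξ <;> simp [hamUpdate]
    rw [hpre, measure_union (by simp) (by measurability),
      measure_union (by simp) (measurableSet_singleton _), htrip, htrip, htrip]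
    simp only [ber_false, ber_true]
    rw [ofReal_mul3 _ _ _ (by linarith) (by linarith),
      ofReal_mul3 _ _ _ ha.le hαs0, ofReal_mul3 _ _ _ ha.le hαs0,
      ← ENNReal.ofReal_add (mul_nonneg ha.le (mul_nonneg hαs0 (by linarith)))
        (mul_nonneg ha.le (mul_nonneg hαs0 hp.le)),
      ← ENNReal.ofReal_add
        (mul_nonneg (by linarith) (mul_nonneg (by linarith) (by linarith)))
        (by nlinarith),
      ← ENNReal.ofReal_mul (by linarith : (0:ℝ) ≤ 1 - α)]
    exact congrArg _ (by linear_combination -key)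
  · -- (false, true)
    have hpre : hamUpdate ⁻¹' {(false, true)} =
        {((false : Bool), (true : Bool), (false : Bool))} ∪
          {((false : Bool), (true : Bool), (true : Bool))} := by
      ext ⟨x, y, ξ⟩; cases x <;> cases y <;> cases ξ <;> simp [hamUpdate]
    rw [hpre, measure_union (by simp) (measurableSet_singleton _), htrip, htrip]
    simp only [ber_false, ber_true]
    rw [ofReal_mul3 _ _ _ (by linarith) hαs0, ofReal_mul3 _ _ _ (by linarith) hαs0,
      ← ENNReal.ofReal_add
        (mul_nonneg (by linarith) (mul_nonneg hαs0 (by linarith)))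
        (mul_nonneg (by linarith) (mul_nonneg hαs0 hp.le)),
      ← ENNReal.ofReal_mul (by linarith : (0:ℝ) ≤ 1 - α)]
    exact congrArg _ (by ring)
  · -- (true, false)
    have hpre : hamUpdate ⁻¹' {(true, false)} =
        {((true : Bool), (false : Bool), (false : Bool))} ∪
          {((true : Bool), (false : Bool), (true : Bool))} := by
      ext ⟨x, y, ξ⟩; cases x <;> cases y <;> cases ξ <;> simp [hamUpdate]
    rw [hpre, measure_union (by simp) (measurableSet_singleton _), htrip, htrip]
    simp only [ber_false, ber_true]
    rw [ofReal_mul3 _ _ _ ha.le (by linarith), ofReal_mul3 _ _ _ ha.le (by linarith),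
      ← ENNReal.ofReal_add
        (mul_nonneg ha.le (mul_nonneg (by linarith) (by linarith)))
        (mul_nonneg ha.le (mul_nonneg (by linarith) hp.le)),
      ← ENNReal.ofReal_mul ha.le]
    exact congrArg _ (by ring)
  · -- (true, true)
    have hpre : hamUpdate ⁻¹' {(true, true)} =
        {((false : Bool), (false : Bool), (true : Bool))} := by
      ext ⟨x, y, ξ⟩; cases x <;> cases y <;> cases ξ <;> simp [hamUpdate]
    rw [hpre, htrip]
    simp only [ber_false, ber_true]
    rw [ofReal_mul3 _ _ _ (by linarith) (by linarith), ← ENNReal.ofReal_mul ha.le]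
    exact congrArg _ (by linear_combination key)
end

section
/- Let a, b > 0 and 0 < p < 1 with p < min(a/b, b/a). Define φ(α) = a·α + b·p(1-α)/(α + p(1-α)) for α ∈ (0,1). Then the value α₀ = (√(p·b/a) - p)/(1-p) lies in (0,1), and for every α ∈ (0,1) one has φ(α) ≥ φ(α₀) = √p·(2√(ab) - (a+b)√p)/(1-p). -/
/-!
Substituting `D = α + p (1 - α) = p + (1 - p) α` turns the rate into
`φ(α) = (a D + b p / D - (a + b) p) / (1 - p)`.
With `s = √(p b / a)`, so that `b p = a s²`, one has `a D + a s² / D - 2 a s = a (D - s)² / D ≥ 0`: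
the minimum is attained at `D = s`, i.e. at `α₀ = (s - p) / (1 - p)`, and equals
`(2 a s - (a + b) p) / (1 - p)`, where `a s = √p √(a b)`.
The hypotheses `p < b / a` and `p < a / b` are exactly `p < s` and `s < 1`, i.e. `α₀ ∈ (0, 1)`.
-/

open Real

noncomputable def rate (a b p α : ℝ) : ℝ :=
  a * α + b * (p * (1 - α) / (α + p * (1 - α)))

lemma rate_eq (a b : ℝ) {p α : ℝ} (hp : p ≠ 1) (hD : α + p * (1 - α) ≠ 0) :
    rate a b p α =
      (a * (α + p * (1 - α)) + b * p / (α + p * (1 - α)) - (a + b) * p) / (1 - p) := by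
  have h1p : 1 - p ≠ 0 := sub_ne_zero.mpr hp.symm
  unfold rate
  field_simp
  ring

lemma two_mul_mul_le_add_div {a D : ℝ} (s : ℝ) (ha : 0 ≤ a) (hD : 0 < D) :
    2 * a * s ≤ a * D + a * s ^ 2 / D := by
  have hsq : a * D + a * s ^ 2 / D - 2 * a * s = a * (D - s) ^ 2 / D := by
    field_simp
    ring
  have : 0 ≤ a * (D - s) ^ 2 / D := by positivity
  linarith

lemma rate_ge {a b p s α : ℝ} (ha : 0 ≤ a) (hp1 : p < 1) (hbp : b * p = a * s ^ 2)
    (hD : 0 < α + p * (1 - α)) :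
    (2 * a * s - (a + b) * p) / (1 - p) ≤ rate a b p α := by
  rw [rate_eq a b hp1.ne hD.ne', hbp]
  gcongr
  exact two_mul_mul_le_add_div s ha hD

lemma rate_of_denom_eq {a b p s α : ℝ} (hp : p ≠ 1) (hbp : b * p = a * s ^ 2) (hs : s ≠ 0)
    (hD : α + p * (1 - α) = s) :
    rate a b p α = (2 * a * s - (a + b) * p) / (1 - p) := by
  rw [rate_eq a b hp (hD ▸ hs), hD, hbp]
  field_simp
  ring

lemma sub_div_one_sub_add_mul_one_sub (s : ℝ) {p : ℝ} (hp : p ≠ 1) :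
    (s - p) / (1 - p) + p * (1 - (s - p) / (1 - p)) = s := by
  have h1p : 1 - p ≠ 0 := sub_ne_zero.mpr hp.symm
  field_simp
  ring

lemma mul_sqrt_mul_div_eq {a p : ℝ} (b : ℝ) (ha : 0 < a) (hp : 0 ≤ p) :
    a * √(p * b / a) = √p * √(a * b) := by
  rw [← sqrt_mul hp, ← sqrt_sq ha.le, ← sqrt_mul (sq_nonneg a),
    sqrt_sq ha.le]
  congr 1
  field_simp

theorem optimal_rate_model1 (a b p : ℝ) (ha : 0 < a) (hb : 0 < b)
    (hp : 0 < p) (hp1 : p < 1) (hpab : p < a / b) (hpba : p < b / a) :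
    (0 < (Real.sqrt (p * b / a) - p) / (1 - p) ∧ (Real.sqrt (p * b / a) - p) / (1 - p) < 1) ∧
    (∀ α : ℝ, 0 < α → α < 1 →
      a * α + b * (p * (1 - α) / (α + p * (1 - α))) ≥
        a * ((Real.sqrt (p * b / a) - p) / (1 - p)) +
          b * (p * (1 - (Real.sqrt (p * b / a) - p) / (1 - p)) /
            ((Real.sqrt (p * b / a) - p) / (1 - p) +
              p * (1 - (Real.sqrt (p * b / a) - p) / (1 - p))))) ∧
    a * ((Real.sqrt (p * b / a) - p) / (1 - p)) +
        b * (p * (1 - (Real.sqrt (p * b / a) - p) / (1 - p)) /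
          ((Real.sqrt (p * b / a) - p) / (1 - p) +
            p * (1 - (Real.sqrt (p * b / a) - p) / (1 - p)))) =
      Real.sqrt p * (2 * Real.sqrt (a * b) - (a + b) * Real.sqrt p) / (1 - p) := by
  set s := √(p * b / a)
  have h1p : 0 < 1 - p := by linarith
  have hbp : b * p = a * s ^ 2 := by
    rw [sq_sqrt (by positivity)]
    field_simp
  have hpa : p * a < b := (lt_div_iff₀ ha).1 hpba
  have hps : p < s := lt_sqrt_of_sq_lt <| by
    rw [lt_div_iff₀ ha]
    nlinarith
  have hs1 : s < 1 := (sqrt_lt' one_pos).2 <| by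
    rw [one_pow, div_lt_one ha]
    exact (lt_div_iff₀ hb).1 hpab
  have hopt : rate a b p ((s - p) / (1 - p)) = (2 * a * s - (a + b) * p) / (1 - p) :=
    rate_of_denom_eq hp1.ne hbp (by linarith) (sub_div_one_sub_add_mul_one_sub s hp1.ne)
  refine ⟨⟨div_pos (by linarith) h1p, (div_lt_one h1p).2 (by linarith)⟩, fun α h0 h1 => ?_, ?_⟩
  · change rate a b p ((s - p) / (1 - p)) ≤ rate a b p α
    rw [hopt]
    exact rate_ge ha.le hp1 hbp (by nlinarith)
  · change rate a b p ((s - p) / (1 - p)) = _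
    have has : a * s = √p * √(a * b) := mul_sqrt_mul_div_eq b ha hp.le
    rw [hopt, mul_assoc, has]
    congr 1
    linear_combination (a + b) * sq_sqrt hp.le
end

section
/- Let a, b > 0 and 0 < p < min(a/b, b/a). For α', β' ∈ (0,1) define φ(a,b,α) = a·α + b·p(1-α)/(α + p(1-α)). If a', b' > 0 satisfy a/b ≠ a'/b' and p < min(a'/b', b'/a'), then φ(a', b', α(a,b)) > φ(a', b', α(a',b')), where α(x,y) = (√(p·y/x) - p)/(1-p). -/
noncomputable def phi (a b p α : ℝ) : ℝ := a * α + b * (p * (1 - α) / (α + p * (1 - α)))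

noncomputable def alphaOpt (p x y : ℝ) : ℝ := (Real.sqrt (p * y / x) - p) / (1 - p)

/-! Substituting `α = (s - p) / (1 - p)` makes the denominator of `phi` equal to `s`, so
`phi a' b' p (alphaOpt p x y)` is an affine image of `g(s) = a' s + p b' / s` at `s = √(p y / x)`.
The function `g` is strictly minimised at `√(p b' / a')`, since
`g(s) - g(√(p b' / a')) = a' (s - √(p b' / a'))² / s`. -/

theorem phi_sub_div_one_sub (a b p s : ℝ) (hs : s ≠ 0) (hp : p ≠ 1) :
    phi a b p ((s - p) / (1 - p)) = (a * s + p * b / s - (a + b) * p) / (1 - p) := by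
  have hp' : 1 - p ≠ 0 := sub_ne_zero.mpr hp.symm
  have hden : (s - p) / (1 - p) + p * (1 - (s - p) / (1 - p)) = s := by
    field_simp
    ring
  rw [phi, hden]
  field_simp
  ring

theorem mul_add_div_sqrt_lt {a c s : ℝ} (ha : 0 < a) (hc : 0 < c) (hs : 0 < s)
    (hne : s ≠ √(c / a)) :
    a * √(c / a) + c / √(c / a) < a * s + c / s := by
  set t := √(c / a)
  have ht : 0 < t := by positivity
  have hct : c = a * t ^ 2 := by
    rw [Real.sq_sqrt (by positivity)]
    field_simp
  have hgap : a * s + c / s - (a * t + c / t) = a * (s - t) ^ 2 / s := by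
    rw [hct]
    field_simp
    ring
  have : 0 < a * (s - t) ^ 2 / s := by
    have := sub_ne_zero.mpr hne
    positivity
  linarith

theorem sqrt_mul_div_ne {p a b a' b' : ℝ} (hp : 0 < p) (ha : 0 < a) (hb : 0 < b)
    (ha' : 0 < a') (hb' : 0 < b') (hne : a / b ≠ a' / b') :
    √(p * b / a) ≠ √(p * b' / a') := by
  rw [Ne, Real.sqrt_inj (by positivity) (by positivity), mul_div_assoc, mul_div_assoc,
    mul_right_inj' hp.ne', ← inv_div, ← inv_div a', inv_inj]
  exact hne

theorem wrong_optimizer_strict_general (a b a' b' p : ℝ) (ha : 0 < a) (hb : 0 < b)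
    (ha' : 0 < a') (hb' : 0 < b') (hp : 0 < p) (hp1 : p < 1)
    (hne : a / b ≠ a' / b') :
    phi a' b' p (alphaOpt p a b) > phi a' b' p (alphaOpt p a' b') := by
  have hs : 0 < √(p * b / a) := by positivity
  have hs' : 0 < √(p * b' / a') := by positivity
  rw [gt_iff_lt, alphaOpt, alphaOpt, phi_sub_div_one_sub _ _ _ _ hs.ne' hp1.ne,
    phi_sub_div_one_sub _ _ _ _ hs'.ne' hp1.ne]
  gcongr ?_ / _
  gcongr ?_ - _
  exact mul_add_div_sqrt_lt ha' (by positivity) hs (sqrt_mul_div_ne hp ha hb ha' hb' hne)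

theorem wrong_optimizer_strict (a b a' b' p : ℝ) (ha : 0 < a) (hb : 0 < b)
    (ha' : 0 < a') (hb' : 0 < b') (hp : 0 < p) (hp1 : p < 1)
    (hpab : p < a / b) (hpba : p < b / a)
    (hpab' : p < a' / b') (hpba' : p < b' / a')
    (hne : a / b ≠ a' / b') :
    phi a' b' p (alphaOpt p a b) > phi a' b' p (alphaOpt p a' b') :=
  wrong_optimizer_strict_general a b a' b' p ha hb ha' hb' hp hp1 hne
end
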